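/- Let V be a finite-dimensional complex inner product space of dimension n with Hermitian inner product g. Define the (0,4)-tensor B by B(E,F,G,H) = g(E,F)g(G,H) + g(E,H)g(F,G), and for unit vectors X, Y and a unitary basis {e_1,...,e_n}, define Q(B)(X,X̄,Y,Ȳ) = Σ_{μ,ν} (|B_{Xμ̄νȲ}|² − |B_{Xμ̄Yν̄}|² + B_{XX̄νμ̄}B_{μν̄YȲ}) − Σ_μ Re(B_{Xμ̄}B_{μX̄YȲ} + B_{Yμ̄}B_{XX̄μȲ}), where B_{AB̄} denotes the trace g^{γδ̄}B_{AB̄γδ̄}. Then Q(B)(X,X̄,Y,Ȳ) = −(n+1)(|X|²|Y|² + |g(X̄,Y)|²), and in particular Q(B)(X,X̄,Y,Ȳ) ≤ 0. -/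

import Mathlib

open Complex Finset

/-- A complexified tangent vector of `ℂⁿ`: holomorphic and antiholomorphic components. -/
abbrev CVec (n : ℕ) := (Fin n → ℂ) × (Fin n → ℂ)

/-- The complex-bilinear extension of the Hermitian metric `g` to the complexified space. -/
noncomputable def gC {n : ℕ} (u v : CVec n) : ℂ := ∑ i, (u.1 i * v.2 i + u.2 i * v.1 i)

/-- The `(1,0)`-vector with components `x`. -/
def holC {n : ℕ} (x : Fin n → ℂ) : CVec n := (x, 0)

/-- Complex conjugation on the complexified space. -/
def barC {n : ℕ} (u : CVec n) : CVec n :=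
  (fun i => (starRingEnd ℂ) (u.2 i), fun i => (starRingEnd ℂ) (u.1 i))

/-- The unitary frame vector `e_μ`. -/
def eC {n : ℕ} (μ : Fin n) : CVec n := (fun i => if i = μ then 1 else 0, 0)

/-- The tensor `B(E,F,G,H) = g(E,F)g(G,H) + g(E,H)g(F,G)`. -/
noncomputable def BC {n : ℕ} (E F G H : CVec n) : ℂ := gC E F * gC G H + gC E H * gC F G

/-- The trace `B_{AB̄} = ∑_ν B(A, B̄, e_ν, ē_ν)`. -/
noncomputable def traceBC {n : ℕ} (A B : CVec n) : ℂ := ∑ ν, BC A B (eC ν) (barC (eC ν))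

/-- The quadratic form `Q(B)(X, X̄, Y, Ȳ)`. -/
noncomputable def QB {n : ℕ} (X Y : Fin n → ℂ) : ℂ :=
  (∑ μ, ∑ ν,
      ((Complex.normSq (BC (holC X) (barC (eC μ)) (eC ν) (barC (holC Y))) : ℂ)
        - (Complex.normSq (BC (holC X) (barC (eC μ)) (holC Y) (barC (eC ν))) : ℂ)
        + BC (holC X) (barC (holC X)) (eC ν) (barC (eC μ))
            * BC (eC μ) (barC (eC ν)) (holC Y) (barC (holC Y))))
    - ∑ μ,
      ((Complex.re
          (traceBC (holC X) (barC (eC μ)) * BC (eC μ) (barC (holC X)) (holC Y) (barC (holC Y))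
            + traceBC (holC Y) (barC (eC μ))
              * BC (holC X) (barC (holC X)) (eC μ) (barC (holC Y)))) : ℂ)

/-! On `(1,0)`-vectors and their conjugates `B` reads
`B(a, b̄, c, d̄) = ⟨a,b⟩⟨c,d⟩ + ⟨a,d⟩⟨c,b⟩` with `⟨a,b⟩ = a ⬝ᵥ star b`. In the unitary frame every
component of `B` entering `Q(B)` is therefore a rank-one matrix plus a multiple of the identity,
or a symmetrised rank-one matrix, and each double sum collapses to a combination of `|X|²|Y|²` and
`|⟨X,Y⟩|²`. Since the traces are `B_{Aμ̄} = (n+1) A_μ`, the coefficients of these two quantities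
in `Q(B)` are `(1, n+2) - (2, 2) + (n+2, 1) - 2(n+1)(1, 1) = -(n+1)(1, 1)`. -/

open Matrix

section
variable {ι R : Type*} [Fintype ι] [CommSemiring R]

theorem sum_sum_rankOne_add_diag_mul [DecidableEq ι] (u v w z : ι → R) (c d : R) :
    ∑ μ, ∑ ν, (u μ * v ν + if μ = ν then c else 0) * (w μ * z ν + if μ = ν then d else 0)
      = (u ⬝ᵥ w) * (v ⬝ᵥ z) + d * (u ⬝ᵥ v) + c * (w ⬝ᵥ z) + Fintype.card ι * (c * d) := by
  calc _ = ∑ μ, ∑ ν, (u μ * w μ * (v ν * z ν)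
        + if μ = ν then d * (u μ * v μ) + c * (w μ * z μ) + c * d else 0) := by
        refine sum_congr rfl fun μ _ => sum_congr rfl fun ν _ => ?_
        split_ifs with h
        · subst h; ring
        · ring
    _ = _ := by
        simp only [sum_add_distrib, sum_ite_eq, mem_univ, if_true, dotProduct, ← mul_sum,
          ← sum_mul, sum_const, card_univ, nsmul_eq_mul]
        ring

theorem sum_sum_add_swap_mul (u v w z : ι → R) :
    ∑ μ, ∑ ν, (u μ * v ν + u ν * v μ) * (w μ * z ν + w ν * z μ)
      = 2 * ((u ⬝ᵥ w) * (v ⬝ᵥ z) + (u ⬝ᵥ z) * (v ⬝ᵥ w)) := by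
  calc _ = ∑ μ, ∑ ν, (u μ * w μ * (v ν * z ν) + u μ * z μ * (v ν * w ν))
        + ∑ μ, ∑ ν, (u ν * w ν * (v μ * z μ) + u ν * z ν * (v μ * w μ)) := by
        simp only [← sum_add_distrib]
        exact sum_congr rfl fun μ _ => sum_congr rfl fun ν _ => by ring
    _ = _ := by
        rw [sum_comm (f := fun μ ν => u ν * w ν * _ + _)]
        simp only [sum_add_distrib, dotProduct, ← mul_sum, ← sum_mul]
        ring

end

section
variable {n : ℕ}

theorem eC_eq_holC_single (μ : Fin n) : eC μ = holC (Pi.single μ 1) := by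
  ext i <;> simp [eC, holC, Pi.single_apply]

theorem gC_holC_barC_holC (x y : Fin n → ℂ) : gC (holC x) (barC (holC y)) = x ⬝ᵥ star y := by
  simp [gC, holC, barC, dotProduct]

theorem gC_barC_holC_holC (x y : Fin n → ℂ) : gC (barC (holC y)) (holC x) = x ⬝ᵥ star y := by
  simp [gC, holC, barC, dotProduct, mul_comm]

theorem BC_holC_barC (a b c d : Fin n → ℂ) :
    BC (holC a) (barC (holC b)) (holC c) (barC (holC d))
      = (a ⬝ᵥ star b) * (c ⬝ᵥ star d) + (a ⬝ᵥ star d) * (c ⬝ᵥ star b) := by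
  rw [BC, gC_holC_barC_holC, gC_holC_barC_holC, gC_holC_barC_holC, gC_barC_holC_holC]

theorem traceBC_holC_barC (a b : Fin n → ℂ) :
    traceBC (holC a) (barC (holC b)) = (n + 1) * (a ⬝ᵥ star b) := by
  simp only [traceBC, eC_eq_holC_single, BC_holC_barC, Pi.star_single, star_one,
    dotProduct_single, single_dotProduct, Pi.single_eq_same, Pi.star_apply, one_mul, mul_one,
    sum_add_distrib, sum_const, card_univ, Fintype.card_fin, nsmul_eq_mul]
  change _ + a ⬝ᵥ star b = _
  ring

end

section
variable {n : ℕ} (X Y : Fin n → ℂ) (μ ν : Fin n)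

theorem BC_holC_barC_eC_eC_barC_holC :
    BC (holC X) (barC (eC μ)) (eC ν) (barC (holC Y))
      = X μ * star Y ν + if μ = ν then X ⬝ᵥ star Y else 0 := by
  simp [eC_eq_holC_single, BC_holC_barC, Pi.single_apply]

theorem BC_holC_barC_eC_holC_barC_eC :
    BC (holC X) (barC (eC μ)) (holC Y) (barC (eC ν)) = X μ * Y ν + X ν * Y μ := by
  simp [eC_eq_holC_single, BC_holC_barC]

theorem BC_holC_barC_holC_eC_barC_eC :
    BC (holC X) (barC (holC X)) (eC ν) (barC (eC μ))
      = X μ * star X ν + if μ = ν then X ⬝ᵥ star X else 0 := by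
  simp [eC_eq_holC_single, BC_holC_barC, Pi.single_apply, add_comm]

theorem BC_eC_barC_eC_holC_barC_holC :
    BC (eC μ) (barC (eC ν)) (holC Y) (barC (holC Y))
      = star Y μ * Y ν + if μ = ν then Y ⬝ᵥ star Y else 0 := by
  simp [eC_eq_holC_single, BC_holC_barC, Pi.single_apply, add_comm, eq_comm]

theorem BC_eC_barC_holC_holC_barC_holC :
    BC (eC μ) (barC (holC X)) (holC Y) (barC (holC Y))
      = star X μ * (Y ⬝ᵥ star Y) + star Y μ * (Y ⬝ᵥ star X) := by
  simp [eC_eq_holC_single, BC_holC_barC]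

theorem BC_holC_barC_holC_eC_barC_holC :
    BC (holC X) (barC (holC X)) (eC μ) (barC (holC Y))
      = (X ⬝ᵥ star X) * star Y μ + (X ⬝ᵥ star Y) * star X μ := by
  simp [eC_eq_holC_single, BC_holC_barC]

theorem traceBC_holC_barC_eC : traceBC (holC X) (barC (eC μ)) = (n + 1) * X μ := by
  simp [eC_eq_holC_single, traceBC_holC_barC]

end

section
variable {n : ℕ} (X Y : Fin n → ℂ)

theorem sum_sum_normSq_BC_holC_barC_eC_eC_barC_holC :
    ∑ μ, ∑ ν, (normSq (BC (holC X) (barC (eC μ)) (eC ν) (barC (holC Y))) : ℂ)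
      = (X ⬝ᵥ star X) * (Y ⬝ᵥ star Y) + (n + 2) * ((X ⬝ᵥ star Y) * (Y ⬝ᵥ star X)) := by
  simp only [← mul_conj, starRingEnd_apply, BC_holC_barC_eC_eC_barC_holC, star_add,
    star_mul', apply_ite star, star_zero, Pi.star_apply, star_star]
  refine (sum_sum_rankOne_add_diag_mul X (star Y) (star X) Y _ _).trans ?_
  rw [Fintype.card_fin, ← dotProduct_star, dotProduct_comm (star Y), dotProduct_comm (star X)]
  ring

theorem sum_sum_normSq_BC_holC_barC_eC_holC_barC_eC :
    ∑ μ, ∑ ν, (normSq (BC (holC X) (barC (eC μ)) (holC Y) (barC (eC ν))) : ℂ)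
      = 2 * ((X ⬝ᵥ star X) * (Y ⬝ᵥ star Y) + (X ⬝ᵥ star Y) * (Y ⬝ᵥ star X)) := by
  simp only [← mul_conj, starRingEnd_apply, BC_holC_barC_eC_holC_barC_eC, star_add, star_mul']
  exact sum_sum_add_swap_mul X Y (star X) (star Y)

theorem sum_sum_BC_mul_BC :
    ∑ μ, ∑ ν, BC (holC X) (barC (holC X)) (eC ν) (barC (eC μ))
        * BC (eC μ) (barC (eC ν)) (holC Y) (barC (holC Y))
      = (n + 2) * ((X ⬝ᵥ star X) * (Y ⬝ᵥ star Y)) + (X ⬝ᵥ star Y) * (Y ⬝ᵥ star X) := by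
  simp only [BC_holC_barC_holC_eC_barC_eC, BC_eC_barC_eC_holC_barC_holC]
  rw [sum_sum_rankOne_add_diag_mul X (star X) (star Y) Y, Fintype.card_fin,
    dotProduct_comm (star Y), dotProduct_comm (star X)]
  ring

theorem sum_traceBC_mul_BC :
    ∑ μ, (traceBC (holC X) (barC (eC μ)) * BC (eC μ) (barC (holC X)) (holC Y) (barC (holC Y))
        + traceBC (holC Y) (barC (eC μ)) * BC (holC X) (barC (holC X)) (eC μ) (barC (holC Y)))
      = 2 * ((n : ℂ) + 1) * BC (holC X) (barC (holC X)) (holC Y) (barC (holC Y)) := by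
  simp only [traceBC_holC_barC_eC, BC_eC_barC_holC_holC_barC_holC,
    BC_holC_barC_holC_eC_barC_holC, BC_holC_barC]
  calc _ = ∑ μ, ((n + 1) * (X μ * star X μ) * (Y ⬝ᵥ star Y)
        + (n + 1) * (X μ * star Y μ) * (Y ⬝ᵥ star X)
        + (n + 1) * (Y μ * star Y μ) * (X ⬝ᵥ star X)
        + (n + 1) * (Y μ * star X μ) * (X ⬝ᵥ star Y)) :=
        sum_congr rfl fun μ _ => by ring
    _ = _ := by
        simp only [sum_add_distrib, ← sum_mul, ← mul_sum]
        simp only [dotProduct]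
        ring

theorem BC_holC_barC_self_eq_normSq :
    BC (holC X) (barC (holC X)) (holC Y) (barC (holC Y))
      = (((∑ i, normSq (X i)) * (∑ i, normSq (Y i)) : ℝ) : ℂ)
        + (normSq (gC (holC X) (barC (holC Y))) : ℂ) := by
  have hnormSq (x : Fin n → ℂ) : ((∑ i, normSq (x i) : ℝ) : ℂ) = x ⬝ᵥ star x := by
    simp [dotProduct, mul_conj]
  rw [BC_holC_barC, gC_holC_barC_holC, ← mul_conj, starRingEnd_apply, ← dotProduct_star,
    ofReal_mul, hnormSq, hnormSq]

theorem QB_eq_neg_mul_BC :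
    QB X Y = -((n : ℂ) + 1) * BC (holC X) (barC (holC X)) (holC Y) (barC (holC Y)) := by
  obtain ⟨r, hr⟩ : ∃ r : ℝ, BC (holC X) (barC (holC X)) (holC Y) (barC (holC Y)) = r :=
    ⟨_, (BC_holC_barC_self_eq_normSq X Y).trans (ofReal_add _ _).symm⟩
  have hre : ∑ μ, (((traceBC (holC X) (barC (eC μ))
        * BC (eC μ) (barC (holC X)) (holC Y) (barC (holC Y))
        + traceBC (holC Y) (barC (eC μ))
          * BC (holC X) (barC (holC X)) (eC μ) (barC (holC Y))).re : ℝ) : ℂ)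
      = 2 * ((n : ℂ) + 1) * r := by
    rw [← ofReal_sum, ← re_sum, sum_traceBC_mul_BC, hr]
    norm_cast
  rw [QB, hre]
  simp only [sum_add_distrib, sum_sub_distrib]
  rw [sum_sum_normSq_BC_holC_barC_eC_eC_barC_holC, sum_sum_normSq_BC_holC_barC_eC_holC_barC_eC,
    sum_sum_BC_mul_BC, ← hr, BC_holC_barC]
  ring

end

/-- `Q(B)(X,X̄,Y,Ȳ) = −(n+1)(|X|²|Y|² + |g(X̄,Y)|²) ≤ 0`. -/
theorem stmt0 (n : ℕ) (X Y : Fin n → ℂ) :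
    QB X Y =
      -((n : ℂ) + 1) *
        (((∑ i, Complex.normSq (X i)) * (∑ i, Complex.normSq (Y i)) : ℝ)
          + (Complex.normSq (gC (holC X) (barC (holC Y))) : ℝ))
    ∧ (QB X Y).re ≤ 0 := by
  rw [QB_eq_neg_mul_BC, BC_holC_barC_self_eq_normSq]
  refine ⟨rfl, ?_⟩
  have hnonneg : 0 ≤ (∑ i, normSq (X i)) * (∑ i, normSq (Y i))
      + normSq (gC (holC X) (barC (holC Y))) :=
    add_nonneg (mul_nonneg (sum_nonneg fun i _ => normSq_nonneg _)
      (sum_nonneg fun i _ => normSq_nonneg _)) (normSq_nonneg _)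
  rw [← ofReal_add, re_mul_ofReal]
  refine mul_nonpos_of_nonpos_of_nonneg ?_ hnonneg
  simp only [neg_re, add_re, natCast_re, one_re]
  exact neg_nonpos.2 (by positivity)
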